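/- arXiv:1812.08405 — 2 statements merged into one kernel-verified Lean document; each statement's English description precedes it below -/
import Mathlib

section
/- Let α ≥ 1. For complex numbers u, v and vectors ∇u, ∇v (gradients), the pointwise bound |∇(f(u+v) - f(u))| ≤ C (|∇u| |v| |u|^{α-1} + |∇u| |v|^α + |∇v| |u|^α + |∇v| |v|^α) holds, where f(z) = |z|^α z and ∇f(u) = ∂_z f(u) ∇u + ∂_{z̄} f(u) conj(∇u) with ∂_z f(z) = ((α+2)/2)|z|^α and ∂_{z̄} f(z) = (α/2)|z|^{α-2} z². -/
open Complex

/-- The formal gradient of `f(z) = |z|^α z`: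
`∇f(u) = ∂_z f(u) ∇u + ∂_{z̄} f(u) conj(∇u)`, where `∂_z f(z) = ((α+2)/2)|z|^α` and
`∂_{z̄} f(z) = (α/2)|z|^{α-2} z²`, and `conj` acts componentwise on the gradient vector. -/
noncomputable def gradF (d : ℕ) (α : ℝ) (u : ℂ) (du : EuclideanSpace ℂ (Fin d)) :
    EuclideanSpace ℂ (Fin d) :=
  ((((α + 2) / 2 * ‖u‖ ^ α : ℝ) : ℂ)) • du
    + ((((α / 2 * ‖u‖ ^ (α - 2) : ℝ) : ℂ)) * u ^ 2) •
        (show EuclideanSpace ℂ (Fin d) from WithLp.toLp 2 (fun i => starRingEnd ℂ (du i)))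

/-!
Write `∂_{z̄} f(z) = (α/2) |z|^α (z/|z|)²`. By the mean value theorem
`||z|^α - |w|^α| ≤ α (|w| + |z-w|)^{α-1} |z-w|`, and the phase `z/|z|` moves by at most
`2|z-w|/|w|`, which the factor `|w|^α` turns into `2|w|^{α-1}|z-w|`. Hence both coefficients
`∂_z f`, `∂_{z̄} f` have increments `≲ (|u| + |v|)^{α-1} |v| ≲ |v||u|^{α-1} + |v|^α` between
`u` and `u + v`, which gives the terms with `∇u`; the terms with `∇v` only need
`|u+v|^α ≤ 2^α (|u|^α + |v|^α)`.
-/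

namespace Real

lemma add_rpow_le_two_rpow_mul_rpow_add_rpow {a b p : ℝ} (ha : 0 ≤ a) (hb : 0 ≤ b) (hp : 0 ≤ p) :
    (a + b) ^ p ≤ 2 ^ p * (a ^ p + b ^ p) := by
  calc (a + b) ^ p ≤ (2 * max a b) ^ p := by gcongr; linarith [le_max_left a b, le_max_right a b]
    _ = 2 ^ p * max a b ^ p := mul_rpow zero_le_two (ha.trans (le_max_left a b))
    _ ≤ 2 ^ p * (a ^ p + b ^ p) := by
      gcongr
      rcases max_choice a b with h | h <;> rw [h]
      · linarith [rpow_nonneg hb p]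
      · linarith [rpow_nonneg ha p]

lemma rpow_sub_rpow_le_mul_rpow_sub_one {α x y : ℝ} (hα : 1 ≤ α) (hy : 0 ≤ y) (hyx : y ≤ x) :
    x ^ α - y ^ α ≤ α * x ^ (α - 1) * (x - y) := by
  rcases hyx.eq_or_lt with rfl | hyx
  · simp
  obtain ⟨c, hc, hslope⟩ := exists_hasDerivAt_eq_slope (fun x : ℝ ↦ x ^ α)
    (fun x ↦ α * x ^ (α - 1)) hyx (continuous_rpow_const (by linarith)).continuousOn
    fun x _ ↦ hasDerivAt_rpow_const (Or.inr hα)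
  rw [eq_div_iff (sub_pos.2 hyx).ne'] at hslope
  rw [← hslope]
  have : c ^ (α - 1) ≤ x ^ (α - 1) :=
    rpow_le_rpow (hy.trans hc.1.le) hc.2.le (by linarith)
  gcongr

lemma abs_rpow_sub_rpow_le {α x y : ℝ} (hα : 1 ≤ α) (hx : 0 ≤ x) (hy : 0 ≤ y) :
    |x ^ α - y ^ α| ≤ α * max x y ^ (α - 1) * |x - y| := by
  rcases le_total y x with h | h
  · rw [max_eq_left h, abs_of_nonneg (sub_nonneg.2 h),
      abs_of_nonneg (sub_nonneg.2 (rpow_le_rpow hy h (by linarith)))]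
    exact rpow_sub_rpow_le_mul_rpow_sub_one hα hy h
  · rw [max_eq_right h, abs_sub_comm, abs_sub_comm x, abs_of_nonneg (sub_nonneg.2 h),
      abs_of_nonneg (sub_nonneg.2 (rpow_le_rpow hx h (by linarith)))]
    exact rpow_sub_rpow_le_mul_rpow_sub_one hα hx h

lemma add_rpow_sub_one_mul_le {α t r : ℝ} (hα : 1 ≤ α) (ht : 0 ≤ t) (hr : 0 ≤ r) :
    (t + r) ^ (α - 1) * r ≤ 2 ^ (α - 1) * (r * t ^ (α - 1) + r ^ α) := by
  have hrα : r ^ α = r ^ (α - 1) * r := by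
    rw [← rpow_add_one' hr (by linarith), sub_add_cancel]
  rw [hrα]
  calc (t + r) ^ (α - 1) * r ≤ 2 ^ (α - 1) * (t ^ (α - 1) + r ^ (α - 1)) * r := by
        gcongr; exact add_rpow_le_two_rpow_mul_rpow_add_rpow ht hr (by linarith)
    _ = 2 ^ (α - 1) * (r * t ^ (α - 1) + r ^ (α - 1) * r) := by ring

end Real

lemma abs_norm_rpow_sub_norm_rpow_le {E : Type*} [SeminormedAddCommGroup E] {α : ℝ} (hα : 1 ≤ α)
    (z w : E) : |‖z‖ ^ α - ‖w‖ ^ α| ≤ α * (‖w‖ + ‖z - w‖) ^ (α - 1) * ‖z - w‖ := by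
  have hmax : max ‖z‖ ‖w‖ ≤ ‖w‖ + ‖z - w‖ :=
    max_le (norm_le_insert' z w) (le_add_of_nonneg_right (norm_nonneg _))
  calc |‖z‖ ^ α - ‖w‖ ^ α| ≤ α * max ‖z‖ ‖w‖ ^ (α - 1) * |‖z‖ - ‖w‖| :=
        Real.abs_rpow_sub_rpow_le hα (norm_nonneg z) (norm_nonneg w)
    _ ≤ α * (‖w‖ + ‖z - w‖) ^ (α - 1) * ‖z - w‖ := by
        gcongr
        exact abs_norm_sub_norm_le z w

namespace Complex

lemma norm_div_norm_sub_div_norm_le {z w : ℂ} (hw : w ≠ 0) :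
    ‖z / ‖z‖ - w / ‖w‖‖ ≤ 2 * ‖z - w‖ / ‖w‖ := by
  rcases eq_or_ne z 0 with rfl | hz
  · simp [hw]
  have hz' : (0 : ℝ) < ‖z‖ := norm_pos_iff.2 hz
  have hw' : (0 : ℝ) < ‖w‖ := norm_pos_iff.2 hw
  have key : z / ‖z‖ - w / ‖w‖ = (((‖w‖ - ‖z‖ : ℝ) : ℂ) * z + ‖z‖ * (z - w)) / (‖z‖ * ‖w‖) := by
    have : (‖z‖ : ℂ) ≠ 0 := by exact_mod_cast hz'.ne'
    have : (‖w‖ : ℂ) ≠ 0 := by exact_mod_cast hw'.ne'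
    field_simp
    push_cast
    ring
  have hnum : ‖((‖w‖ - ‖z‖ : ℝ) : ℂ) * z + ‖z‖ * (z - w)‖ ≤ 2 * ‖z‖ * ‖z - w‖ :=
    calc _ ≤ |‖w‖ - ‖z‖| * ‖z‖ + ‖z‖ * ‖z - w‖ := by
          refine (norm_add_le _ _).trans_eq ?_
          simp only [norm_mul, norm_real, Real.norm_eq_abs, abs_norm]
      _ ≤ ‖z - w‖ * ‖z‖ + ‖z‖ * ‖z - w‖ := by
          gcongr
          rw [norm_sub_rev]
          exact abs_norm_sub_norm_le w z
      _ = 2 * ‖z‖ * ‖z - w‖ := by ring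
  have hden : ‖(‖z‖ * ‖w‖ : ℂ)‖ = ‖z‖ * ‖w‖ := by simp
  rw [key, norm_div, hden, div_le_div_iff₀ (mul_pos hz' hw') hw']
  calc _ ≤ 2 * ‖z‖ * ‖z - w‖ * ‖w‖ := by gcongr
    _ = _ := by ring

end Complex

lemma norm_rpow_mul_norm_div_norm_sub_le {α : ℝ} (hα : 0 < α) (z w : ℂ) :
    ‖w‖ ^ α * ‖z / ‖z‖ - w / ‖w‖‖ ≤ 2 * ‖w‖ ^ (α - 1) * ‖z - w‖ := by
  rcases eq_or_ne w 0 with rfl | hw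
  · simp only [norm_zero, Real.zero_rpow hα.ne', zero_mul, sub_zero]
    positivity
  have hw' : 0 < ‖w‖ := norm_pos_iff.2 hw
  calc ‖w‖ ^ α * ‖z / ‖z‖ - w / ‖w‖‖ ≤ ‖w‖ ^ α * (2 * ‖z - w‖ / ‖w‖) := by
        gcongr; exact norm_div_norm_sub_div_norm_le hw
    _ = 2 * ‖w‖ ^ (α - 1) * ‖z - w‖ := by
        rw [Real.rpow_sub_one hw'.ne']; ring

lemma norm_rpow_mul_div_norm_sq_sub_le {α : ℝ} (hα : 1 ≤ α) (z w : ℂ) :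
    ‖((‖z‖ ^ α : ℝ) : ℂ) * (z / ‖z‖) ^ 2 - ((‖w‖ ^ α : ℝ) : ℂ) * (w / ‖w‖) ^ 2‖
      ≤ (α + 4) * (‖w‖ + ‖z - w‖) ^ (α - 1) * ‖z - w‖ := by
  have hunit : ∀ x : ℂ, ‖x / ‖x‖‖ ≤ 1 := fun x ↦ by
    rw [norm_div, norm_real, norm_norm]; exact div_self_le_one _
  have hsplit : ((‖z‖ ^ α : ℝ) : ℂ) * (z / ‖z‖) ^ 2 - ((‖w‖ ^ α : ℝ) : ℂ) * (w / ‖w‖) ^ 2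
      = ((‖z‖ ^ α - ‖w‖ ^ α : ℝ) : ℂ) * (z / ‖z‖) ^ 2
        + ((‖w‖ ^ α : ℝ) : ℂ) * ((z / ‖z‖ - w / ‖w‖) * (z / ‖z‖ + w / ‖w‖)) := by
    push_cast; ring
  have hsum : ‖z / ‖z‖ + w / ‖w‖‖ ≤ 2 :=
    (norm_add_le _ _).trans (by linarith [hunit z, hunit w])
  have hmono : ‖w‖ ^ (α - 1) ≤ (‖w‖ + ‖z - w‖) ^ (α - 1) := by
    gcongr; exact le_add_of_nonneg_right (norm_nonneg _)
  rw [hsplit]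
  calc _ ≤ |‖z‖ ^ α - ‖w‖ ^ α| * 1 + ‖w‖ ^ α * (‖z / ‖z‖ - w / ‖w‖‖ * 2) := by
        refine (norm_add_le _ _).trans ?_
        simp only [norm_mul, norm_pow, norm_real, Real.norm_eq_abs,
          abs_of_nonneg (Real.rpow_nonneg (norm_nonneg w) α)]
        gcongr
        exact pow_le_one₀ (norm_nonneg _) (hunit z)
    _ ≤ α * (‖w‖ + ‖z - w‖) ^ (α - 1) * ‖z - w‖ * 1 + 2 * ‖w‖ ^ (α - 1) * ‖z - w‖ * 2 := by
        rw [← mul_assoc (‖w‖ ^ α)]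
        gcongr ?_ * 1 + ?_ * 2
        · exact abs_norm_rpow_sub_norm_rpow_le hα z w
        · exact norm_rpow_mul_norm_div_norm_sub_le (by linarith) z w
    _ ≤ (α + 4) * (‖w‖ + ‖z - w‖) ^ (α - 1) * ‖z - w‖ := by
        have := mul_le_mul_of_nonneg_right hmono (norm_nonneg (z - w))
        linarith

noncomputable def dzF (α : ℝ) (z : ℂ) : ℝ := (α + 2) / 2 * ‖z‖ ^ α

noncomputable def dzbarF (α : ℝ) (z : ℂ) : ℂ := ((α / 2 * ‖z‖ ^ (α - 2) : ℝ) : ℂ) * z ^ 2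

def conjVec {ι : Type*} (x : EuclideanSpace ℂ ι) : EuclideanSpace ℂ ι :=
  WithLp.toLp 2 fun i ↦ starRingEnd ℂ (x i)

lemma norm_conjVec {ι : Type*} [Fintype ι] (x : EuclideanSpace ℂ ι) : ‖conjVec x‖ = ‖x‖ := by
  simp [conjVec, EuclideanSpace.norm_eq]

lemma conjVec_add {ι : Type*} (x y : EuclideanSpace ℂ ι) :
    conjVec (x + y) = conjVec x + conjVec y := by
  ext i; simp [conjVec]

lemma gradF_eq (d : ℕ) (α : ℝ) (u : ℂ) (du : EuclideanSpace ℂ (Fin d)) :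
    gradF d α u du = (dzF α u : ℂ) • du + dzbarF α u • conjVec du := rfl

lemma dzbarF_eq (α : ℝ) (z : ℂ) :
    dzbarF α z = ((α / 2 : ℝ) : ℂ) * (((‖z‖ ^ α : ℝ) : ℂ) * (z / ‖z‖) ^ 2) := by
  rcases eq_or_ne z 0 with rfl | hz
  · simp [dzbarF]
  have hz' : 0 < ‖z‖ := norm_pos_iff.2 hz
  have hzc : (‖z‖ : ℂ) ≠ 0 := by exact_mod_cast hz'.ne'
  rw [dzbarF, Real.rpow_sub hz', Real.rpow_two]
  push_cast
  field_simp

lemma norm_dzbarF_le {α : ℝ} (hα : 0 ≤ α) (z : ℂ) : ‖dzbarF α z‖ ≤ α / 2 * ‖z‖ ^ α := by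
  rw [dzbarF_eq, norm_mul, norm_mul, norm_pow, norm_real, norm_real, Real.norm_eq_abs,
    Real.norm_eq_abs, abs_of_nonneg (by linarith), abs_of_nonneg (by positivity)]
  have : ‖z / ‖z‖‖ ^ 2 ≤ 1 := by
    rw [norm_div, norm_real, norm_norm]; exact pow_le_one₀ (by positivity) (div_self_le_one _)
  calc _ ≤ α / 2 * (‖z‖ ^ α * 1) := by gcongr
    _ = _ := by ring

lemma norm_gradF_add_sub_le (d : ℕ) (α : ℝ) (z w : ℂ) (dw dv : EuclideanSpace ℂ (Fin d)) :
    ‖gradF d α z (dw + dv) - gradF d α w dw‖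
      ≤ (|dzF α z - dzF α w| + ‖dzbarF α z - dzbarF α w‖) * ‖dw‖
        + (|dzF α z| + ‖dzbarF α z‖) * ‖dv‖ := by
  have hsplit : gradF d α z (dw + dv) - gradF d α w dw
      = ((dzF α z - dzF α w : ℝ) : ℂ) • dw + (dzbarF α z - dzbarF α w) • conjVec dw
        + ((dzF α z : ℝ) : ℂ) • dv + dzbarF α z • conjVec dv := by
    rw [gradF_eq, gradF_eq, conjVec_add]
    push_cast
    module
  rw [hsplit]
  refine norm_add₄_le.trans ?_
  simp only [norm_smul, norm_conjVec, norm_real, Real.norm_eq_abs]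
  linarith

lemma abs_dzF_sub_add_norm_dzbarF_sub_le {α : ℝ} (hα : 1 ≤ α) (u v : ℂ) :
    |dzF α (u + v) - dzF α u| + ‖dzbarF α (u + v) - dzbarF α u‖
      ≤ α * (α + 3) * 2 ^ (α - 1) * (‖v‖ * ‖u‖ ^ (α - 1) + ‖v‖ ^ α) := by
  have hdzF : |dzF α (u + v) - dzF α u| ≤ (α + 2) / 2 * (α * (‖u‖ + ‖v‖) ^ (α - 1) * ‖v‖) := by
    rw [dzF, dzF, ← mul_sub, abs_mul, abs_of_nonneg (by linarith)]
    gcongr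
    simpa using abs_norm_rpow_sub_norm_rpow_le hα (u + v) u
  have hdzbarF : ‖dzbarF α (u + v) - dzbarF α u‖
      ≤ α / 2 * ((α + 4) * (‖u‖ + ‖v‖) ^ (α - 1) * ‖v‖) := by
    rw [dzbarF_eq, dzbarF_eq, ← mul_sub, norm_mul, norm_real, Real.norm_eq_abs,
      abs_of_nonneg (by linarith)]
    gcongr
    simpa using norm_rpow_mul_div_norm_sq_sub_le hα (u + v) u
  calc _ ≤ α * (α + 3) * ((‖u‖ + ‖v‖) ^ (α - 1) * ‖v‖) := by linarith
    _ ≤ α * (α + 3) * (2 ^ (α - 1) * (‖v‖ * ‖u‖ ^ (α - 1) + ‖v‖ ^ α)) := by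
        exact mul_le_mul_of_nonneg_left
          (Real.add_rpow_sub_one_mul_le hα (norm_nonneg u) (norm_nonneg v)) (by positivity)
    _ = _ := by ring

lemma abs_dzF_add_norm_dzbarF_le {α : ℝ} (hα : 0 ≤ α) (u v : ℂ) :
    |dzF α (u + v)| + ‖dzbarF α (u + v)‖ ≤ (α + 1) * 2 ^ α * (‖u‖ ^ α + ‖v‖ ^ α) := by
  have hpow : ‖u + v‖ ^ α ≤ 2 ^ α * (‖u‖ ^ α + ‖v‖ ^ α) :=
    (Real.rpow_le_rpow (norm_nonneg _) (norm_add_le u v) hα).trans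
      (Real.add_rpow_le_two_rpow_mul_rpow_add_rpow (norm_nonneg u) (norm_nonneg v) hα)
  rw [dzF, abs_of_nonneg (by positivity)]
  calc _ ≤ (α + 2) / 2 * ‖u + v‖ ^ α + α / 2 * ‖u + v‖ ^ α := by
        gcongr; exact norm_dzbarF_le hα _
    _ = (α + 1) * ‖u + v‖ ^ α := by ring
    _ ≤ (α + 1) * (2 ^ α * (‖u‖ ^ α + ‖v‖ ^ α)) := by gcongr
    _ = _ := by ring

/-- For `α ≥ 1`, the pointwise bound
`|∇(f(u+v) - f(u))| ≤ C (|∇u||v||u|^{α-1} + |∇u||v|^α + |∇v||u|^α + |∇v||v|^α)`. -/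
theorem stmt1 (d : ℕ) (α : ℝ) (hα : 1 ≤ α) :
    ∃ C > 0, ∀ (u v : ℂ) (du dv : EuclideanSpace ℂ (Fin d)),
      ‖gradF d α (u + v) (du + dv) - gradF d α u du‖
        ≤ C * (‖du‖ * ‖v‖ * ‖u‖ ^ (α - 1)
            + ‖du‖ * ‖v‖ ^ α
            + ‖dv‖ * ‖u‖ ^ α
            + ‖dv‖ * ‖v‖ ^ α) := by
  set A := α * (α + 3) * 2 ^ (α - 1)
  set B := (α + 1) * 2 ^ α
  have hA : 0 ≤ A := by positivity
  have hB : 0 < B := by positivity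
  refine ⟨A + B, by positivity, fun u v du dv ↦ ?_⟩
  calc _ ≤ A * (‖v‖ * ‖u‖ ^ (α - 1) + ‖v‖ ^ α) * ‖du‖ + B * (‖u‖ ^ α + ‖v‖ ^ α) * ‖dv‖ := by
        refine (norm_gradF_add_sub_le d α (u + v) u du dv).trans ?_
        gcongr
        · exact abs_dzF_sub_add_norm_dzbarF_sub_le hα u v
        · exact abs_dzF_add_norm_dzbarF_le (by linarith) u v
    _ ≤ (A + B) * (‖v‖ * ‖u‖ ^ (α - 1) + ‖v‖ ^ α) * ‖du‖
          + (A + B) * (‖u‖ ^ α + ‖v‖ ^ α) * ‖dv‖ := by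
        gcongr <;> linarith
    _ = _ := by ring
end

section
/- Radial Sobolev embedding: for d ≥ 2 there exists C = C(d) > 0 such that for every radial function f ∈ H¹(ℝ^d), sup_{x ≠ 0} |x|^{(d-1)/2} |f(x)| ≤ C ‖f‖_{L²}^{1/2} ‖∇f‖_{L²}^{1/2}. -/
/-!
Write `f z = g ‖z‖` with `g s = f (s • e)` for a unit vector `e`. Radiality gives
`‖g' ‖z‖‖ ≤ ‖Df z‖`, and polar coordinates turn `∫ ‖f‖²` into `c ∫ s^(d-1) ‖g s‖² ds` and bound
`∫ ‖Df‖²` below by `c ∫ s^(d-1) ‖g' s‖² ds`. For `φ s = s^(d-1) ‖g s‖²` and every `t > 0`,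
`φ' ≥ 2 s^(d-1) ⟪g, g'⟫ ≥ -s^(d-1) (t ‖g‖² + t⁻¹ ‖g'‖²)`; as `φ` is integrable it takes
arbitrarily small values beyond `r`, so integrating from `r` gives `φ r ≤ t A + t⁻¹ B`, and
optimizing in `t` gives `φ r ≤ 2 √(A B)`.
-/

open MeasureTheory Set Filter Topology

lemma le_two_mul_sqrt_mul_of_forall_le {p a b : ℝ} (ha : 0 ≤ a) (hb : 0 ≤ b)
    (h : ∀ t > 0, p ≤ t * a + t⁻¹ * b) : p ≤ 2 * √(a * b) := by
  have hlim : Tendsto (fun ε => 2 * √((a + ε) * (b + ε))) (𝓝[>] 0) (𝓝 (2 * √(a * b))) := by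
    refine (Continuous.tendsto' ?_ 0 _ (by simp)).mono_left nhdsWithin_le_nhds
    fun_prop
  -- shifting by `ε` makes the optimal weight `t = √(b + ε) / √(a + ε)` available even if `a = 0`
  refine ge_of_tendsto hlim (eventually_nhdsWithin_of_forall fun ε (hε : 0 < ε) => ?_)
  have hx : 0 < √(a + ε) := Real.sqrt_pos.2 (by linarith)
  have hy : 0 < √(b + ε) := Real.sqrt_pos.2 (by linarith)
  calc p ≤ √(b + ε) / √(a + ε) * a + (√(b + ε) / √(a + ε))⁻¹ * b := h _ (by positivity)
    _ ≤ √(b + ε) / √(a + ε) * √(a + ε) ^ 2 + (√(b + ε) / √(a + ε))⁻¹ * √(b + ε) ^ 2 := by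
      rw [Real.sq_sqrt (by linarith), Real.sq_sqrt (by linarith)]
      gcongr <;> linarith
    _ = 2 * √((a + ε) * (b + ε)) := by
      rw [Real.sqrt_mul (by linarith)]
      field_simp
      ring

lemma exists_gt_le_of_integrableOn_Ioi {φ : ℝ → ℝ} {r ε : ℝ} (hφ : IntegrableOn φ (Ioi r))
    (hε : 0 < ε) : ∃ R > r, φ R ≤ ε := by
  by_contra! hlt
  have hconst : IntegrableOn (fun _ => ε) (Ioi r) :=
    hφ.mono' aestronglyMeasurable_const <| (ae_restrict_mem measurableSet_Ioi).mono
      fun s hs => by rw [Real.norm_of_nonneg hε.le]; exact (hlt s hs).le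
  simp [integrableOn_const_iff, hε.ne'] at hconst

lemma le_setIntegral_Ioi_of_neg_le_deriv {φ φ' m : ℝ → ℝ} {r : ℝ}
    (hφ : ∀ s ∈ Ici r, HasDerivAt φ (φ' s) s) (hφi : IntegrableOn φ (Ioi r))
    (hm : IntegrableOn m (Ioi r)) (hm0 : ∀ s ∈ Ioi r, 0 ≤ m s)
    (hle : ∀ s ∈ Ioi r, -m s ≤ φ' s) :
    φ r ≤ ∫ s in Ioi r, m s := by
  refine le_of_forall_pos_le_add fun ε hε => ?_
  obtain ⟨R, hrR, hφR⟩ := exists_gt_le_of_integrableOn_Ioi hφi hε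
  have hmIcc : IntegrableOn m (Icc r R) :=
    (integrableOn_Icc_iff_integrableOn_Ioc (by simp)).2 (hm.mono_set Ioc_subset_Ioi_self)
  have hFTC : ∫ s in r..R, -m s ≤ φ R - φ r :=
    intervalIntegral.integral_le_sub_of_hasDeriv_right_of_le hrR.le
      (fun s hs => (hφ s hs.1).continuousAt.continuousWithinAt)
      (fun s hs => (hφ s (mem_Ici.2 hs.1.le)).hasDerivWithinAt) hmIcc.neg
      (fun s hs => hle s hs.1)
  have htail : ∫ s in r..R, m s ≤ ∫ s in Ioi r, m s := by
    rw [intervalIntegral.integral_of_le hrR.le]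
    exact setIntegral_mono_set hm ((ae_restrict_mem measurableSet_Ioi).mono hm0)
      (Ioc_subset_Ioi_self.eventuallyLE)
  rw [intervalIntegral.integral_neg] at hFTC
  linarith

section InnerProductSpace

variable {F : Type*} [NormedAddCommGroup F] [InnerProductSpace ℝ F]

lemma neg_le_two_mul_inner {t : ℝ} (ht : 0 < t) (u v : F) :
    -(t * ‖u‖ ^ 2 + t⁻¹ * ‖v‖ ^ 2) ≤ 2 * inner ℝ u v := by
  have hneg := neg_abs_le (inner ℝ u v)
  have hcs := abs_real_inner_le_norm u v
  nlinarith [mul_nonneg (inv_pos.2 ht).le (sq_nonneg (t * ‖u‖ - ‖v‖)), mul_inv_cancel₀ ht.ne']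

lemma pow_mul_norm_sq_le_of_integrableOn_Ioi {g : ℝ → F} (hg : Differentiable ℝ g) (n : ℕ)
    (hA : IntegrableOn (fun s => s ^ n * ‖g s‖ ^ 2) (Ioi 0))
    (hB : IntegrableOn (fun s => s ^ n * ‖deriv g s‖ ^ 2) (Ioi 0)) {r : ℝ} (hr : 0 < r) :
    r ^ n * ‖g r‖ ^ 2 ≤
      2 * √((∫ s in Ioi 0, s ^ n * ‖g s‖ ^ 2) * ∫ s in Ioi 0, s ^ n * ‖deriv g s‖ ^ 2) := by
  refine le_two_mul_sqrt_mul_of_forall_le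
    (setIntegral_nonneg measurableSet_Ioi fun s (hs : 0 < s) => by positivity)
    (setIntegral_nonneg measurableSet_Ioi fun s (hs : 0 < s) => by positivity) fun t ht => ?_
  set m := fun s => t * (s ^ n * ‖g s‖ ^ 2) + t⁻¹ * (s ^ n * ‖deriv g s‖ ^ 2)
  have hm : IntegrableOn m (Ioi 0) := (hA.const_mul t).add (hB.const_mul t⁻¹)
  have hm0 : ∀ s ∈ Ioi (0 : ℝ), 0 ≤ m s := fun s (hs : 0 < s) => by positivity
  have hIoi : Ioi r ⊆ Ioi 0 := Ioi_subset_Ioi hr.le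
  calc r ^ n * ‖g r‖ ^ 2 ≤ ∫ s in Ioi r, m s := by
        refine le_setIntegral_Ioi_of_neg_le_deriv
          (fun s _ => (hasDerivAt_pow n s).mul (hg s).hasDerivAt.norm_sq)
          (hA.mono_set hIoi) (hm.mono_set hIoi) (fun s hs => hm0 s (hIoi hs)) fun s hs => ?_
        have hs : 0 < s := hr.trans hs
        have hinner := mul_le_mul_of_nonneg_left (neg_le_two_mul_inner ht (g s) (deriv g s))
          (pow_nonneg hs.le n)
        have hpow : 0 ≤ (n : ℝ) * s ^ (n - 1) * ‖g s‖ ^ 2 := by positivity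
        linear_combination hinner + hpow
    _ ≤ ∫ s in Ioi 0, m s :=
        setIntegral_mono_set hm ((ae_restrict_mem measurableSet_Ioi).mono hm0) hIoi.eventuallyLE
    _ = _ := by rw [integral_add (hA.const_mul t) (hB.const_mul t⁻¹), integral_const_mul,
        integral_const_mul]

end InnerProductSpace

lemma measureReal_ball_pos {X : Type*} [PseudoMetricSpace X] [ProperSpace X] [MeasurableSpace X]
    [OpensMeasurableSpace X] (μ : Measure X) [μ.IsOpenPosMeasure] [IsFiniteMeasureOnCompacts μ]
    (x : X) {r : ℝ} (hr : 0 < r) : 0 < μ.real (Metric.ball x r) :=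
  ENNReal.toReal_pos (Metric.measure_ball_pos μ x hr).ne' measure_ball_lt_top.ne

section Radial

variable {E : Type*} [NormedAddCommGroup E] [NormedSpace ℝ E]

lemma eq_apply_norm_smul_of_radial {G : Type*} {f : E → G} (hrad : ∀ x y, ‖x‖ = ‖y‖ → f x = f y)
    {e : E} (he : ‖e‖ = 1) (z : E) : f z = f (‖z‖ • e) :=
  hrad _ _ (by rw [norm_smul, he, mul_one, norm_norm])

lemma norm_deriv_comp_smul_le_norm_fderiv {G : Type*} [NormedAddCommGroup G] [NormedSpace ℝ G]
    {f : E → G} (hrad : ∀ x y, ‖x‖ = ‖y‖ → f x = f y) {e : E} (he : ‖e‖ = 1) {z : E}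
    (hz : z ≠ 0) (hf : DifferentiableAt ℝ f z) :
    ‖deriv (fun s : ℝ => f (s • e)) ‖z‖‖ ≤ ‖fderiv ℝ f z‖ := by
  set u := ‖z‖⁻¹ • z
  have hu : ‖u‖ = 1 := norm_smul_inv_norm hz
  have hprofile : (fun s : ℝ => f (s • e)) = fun s => f (s • u) :=
    funext fun s => hrad _ _ (by rw [norm_smul, norm_smul, he, hu])
  have hderiv : HasDerivAt (fun s : ℝ => f (s • u)) (fderiv ℝ f z u) ‖z‖ := by
    have hzu : ‖z‖ • u = z := smul_inv_smul₀ (norm_ne_zero_iff.2 hz) z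
    have hsmul : HasDerivAt (fun s : ℝ => s • u) u ‖z‖ := by
      simpa using (hasDerivAt_id ‖z‖).smul_const u
    exact hf.hasFDerivAt.comp_hasDerivAt_of_eq ‖z‖ hsmul hzu.symm
  rw [hprofile, hderiv.deriv]
  simpa [hu] using (fderiv ℝ f z).le_opNorm u

variable [MeasurableSpace E] [BorelSpace E] [FiniteDimensional ℝ E] (μ : Measure E)
  [μ.IsAddHaarMeasure] {F : Type*} [NormedAddCommGroup F] [InnerProductSpace ℝ F] [CompleteSpace F]

theorem pow_mul_norm_sq_le_of_radial {f : E → F} (hrad : ∀ x y, ‖x‖ = ‖y‖ → f x = f y)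
    (hf : Differentiable ℝ f) (hf2 : Integrable (fun x => ‖f x‖ ^ 2) μ)
    (hdf2 : Integrable (fun x => ‖fderiv ℝ f x‖ ^ 2) μ) {x : E} (hx : x ≠ 0) :
    ‖x‖ ^ (Module.finrank ℝ E - 1) * ‖f x‖ ^ 2 ≤
      2 / (Module.finrank ℝ E * μ.real (Metric.ball 0 1)) *
        √((∫ y, ‖f y‖ ^ 2 ∂μ) * ∫ y, ‖fderiv ℝ f y‖ ^ 2 ∂μ) := by
  have : Nontrivial E := nontrivial_of_ne x 0 hx
  set n := Module.finrank ℝ E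
  set c := n * μ.real (Metric.ball 0 1)
  have hc : 0 < c := mul_pos (by simp [n, Module.finrank_pos]) (measureReal_ball_pos μ 0 one_pos)
  set g := fun s : ℝ => f (s • (‖x‖⁻¹ • x))
  have hfg : ∀ z, f z = g ‖z‖ := eq_apply_norm_smul_of_radial hrad (norm_smul_inv_norm hx)
  have hg : Differentiable ℝ g := hf.comp (differentiable_id.smul_const _)
  have hdg : ∀ᵐ z ∂μ, ‖deriv g ‖z‖‖ ^ 2 ≤ ‖fderiv ℝ f z‖ ^ 2 :=
    (μ.ae_ne 0).mono fun z hz => by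
      gcongr; exact norm_deriv_comp_smul_le_norm_fderiv hrad (norm_smul_inv_norm hx) hz (hf z)
  have hG : Integrable (fun z => ‖deriv g ‖z‖‖ ^ 2) μ :=
    hdf2.mono' ((stronglyMeasurable_deriv g).comp_measurable measurable_norm
      |>.aestronglyMeasurable.norm.pow 2) (hdg.mono fun z hz => by simpa using hz)
  simp_rw [hfg] at hf2 ⊢
  have hA := (integrable_fun_norm_addHaar μ (f := fun s => ‖g s‖ ^ 2)).1 hf2
  have hB := (integrable_fun_norm_addHaar μ (f := fun s => ‖deriv g s‖ ^ 2)).1 hG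
  simp only [smul_eq_mul] at hA hB
  have hI₁ : ∫ z, ‖g ‖z‖‖ ^ 2 ∂μ = c * ∫ s in Ioi 0, s ^ (n - 1) * ‖g s‖ ^ 2 := by
    rw [integral_fun_norm_addHaar μ (fun s => ‖g s‖ ^ 2)]; simp [c, n, mul_assoc]
  have hI₂ : c * ∫ s in Ioi 0, s ^ (n - 1) * ‖deriv g s‖ ^ 2 ≤ ∫ z, ‖fderiv ℝ f z‖ ^ 2 ∂μ := by
    calc _ = ∫ z, ‖deriv g ‖z‖‖ ^ 2 ∂μ := by
          rw [integral_fun_norm_addHaar μ (fun s => ‖deriv g s‖ ^ 2)]; simp [c, n, mul_assoc]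
      _ ≤ _ := integral_mono_ae hG hdf2 hdg
  calc ‖x‖ ^ (n - 1) * ‖g ‖x‖‖ ^ 2
      ≤ 2 * √((∫ s in Ioi 0, s ^ (n - 1) * ‖g s‖ ^ 2) *
          ∫ s in Ioi 0, s ^ (n - 1) * ‖deriv g s‖ ^ 2) :=
        pow_mul_norm_sq_le_of_integrableOn_Ioi hg (n - 1) hA hB (norm_pos_iff.2 hx)
    _ = 2 / c * √((c * ∫ s in Ioi 0, s ^ (n - 1) * ‖g s‖ ^ 2) *
          (c * ∫ s in Ioi 0, s ^ (n - 1) * ‖deriv g s‖ ^ 2)) := by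
        rw [mul_mul_mul_comm, ← sq, Real.sqrt_mul (sq_nonneg c), Real.sqrt_sq hc.le]
        field_simp
    _ ≤ _ := by
        rw [← hI₁]
        gcongr

end Radial

/-- Radial Sobolev (Strauss) embedding: for `d ≥ 2` there exists `C = C(d) > 0` such that for
every radial `f ∈ H¹(ℝ^d)`, `sup_{x ≠ 0} |x|^{(d-1)/2} |f(x)| ≤ C ‖f‖_{L²}^{1/2} ‖∇f‖_{L²}^{1/2}`. -/
theorem stmt5 (d : ℕ) (hd : 2 ≤ d) :
    ∃ C > 0, ∀ f : EuclideanSpace ℝ (Fin d) → ℂ,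
      (∀ x y, ‖x‖ = ‖y‖ → f x = f y) →
      Differentiable ℝ f →
      Integrable (fun x => ‖f x‖ ^ 2) →
      Integrable (fun x => ‖fderiv ℝ f x‖ ^ 2) →
      ∀ x, x ≠ 0 →
        ‖x‖ ^ (((d : ℝ) - 1) / 2) * ‖f x‖
          ≤ C * (∫ y, ‖f y‖ ^ 2) ^ ((1 : ℝ) / 4) * (∫ y, ‖fderiv ℝ f y‖ ^ 2) ^ ((1 : ℝ) / 4) := by
  set c := d * volume.real (Metric.ball (0 : EuclideanSpace ℝ (Fin d)) 1)
  have hc : 0 < c := mul_pos (by positivity) (measureReal_ball_pos _ _ one_pos)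
  refine ⟨√(2 / c), by positivity, fun f hrad hf hf2 hdf2 x hx => ?_⟩
  have key := pow_mul_norm_sq_le_of_radial volume hrad hf hf2 hdf2 hx
  rw [finrank_euclideanSpace_fin] at key
  have hI₁ : 0 ≤ ∫ y, ‖f y‖ ^ 2 := integral_nonneg fun y => sq_nonneg _
  have hI₂ : 0 ≤ ∫ y, ‖fderiv ℝ f y‖ ^ 2 := integral_nonneg fun y => sq_nonneg _
  calc ‖x‖ ^ (((d : ℝ) - 1) / 2) * ‖f x‖ = √(‖x‖ ^ (d - 1) * ‖f x‖ ^ 2) := by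
        rw [Real.sqrt_mul (by positivity), Real.sqrt_sq (norm_nonneg _), Real.sqrt_eq_rpow,
          ← Real.rpow_natCast, ← Real.rpow_mul (norm_nonneg _), Nat.cast_sub (by omega)]
        ring_nf
    _ ≤ √(2 / c * √((∫ y, ‖f y‖ ^ 2) * ∫ y, ‖fderiv ℝ f y‖ ^ 2)) := Real.sqrt_le_sqrt key
    _ = _ := by
        rw [Real.sqrt_mul (by positivity), mul_assoc, ← Real.mul_rpow hI₁ hI₂]
        congr 1
        rw [Real.sqrt_eq_rpow, Real.sqrt_eq_rpow, ← Real.rpow_mul (by positivity)]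
        norm_num
end
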